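/- Let m ≥ 1, let F be a field of characteristic zero, set v = (1+u)^{m+1} u^{−m} ∈ F(u), and let u_0 = u, u_1, …, u_m be the m+1 distinct roots of (1+U)^{m+1} − v U^m in a splitting field over F(u). Then for 0 ≤ j ≤ m−1, the elementary symmetric polynomial of the roots other than u satisfies e_{m−j}(u_1, …, u_m) = (−1)^{m−j−1} Σ_{p=0}^{j} binom(m+1, p) u^{p−j−1}, while e_0(u_1,…,u_m) = 1. In particular every elementary symmetric polynomial of u_1, …, u_m lies in F[u^{−1}], hence so does every symmetric polynomial in u_1, …, u_m. -/

import Mathlib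

/-!
The polynomial `p = (1 + U)^(m+1) - v U^m` is monic of degree `m + 1` and has the `m + 1`
distinct roots `u_i`, so `p = (U - u) q` with `q = ∏_{i ≥ 1} (U - u_i)`. Comparing coefficients
in `p = (U - u) q` telescopes to `u^(j+1) q_j = -∑_{k ≤ j} p_k u^k`, and for `k < m` the
coefficient `p_k = binom(m+1, k)` does not involve `v`; by Vieta `q_j = ± e_{m-j}(u_1, …, u_m)`.
Every symmetric polynomial is a polynomial in the `e_k`, hence lies in `F[u⁻¹]` as well.
-/

open Polynomial Finset

theorem Polynomial.Monic.eq_prod_X_sub_C_of_injective {K ι : Type*} [Field K] [Fintype ι]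
    {p : K[X]} (hp : p.Monic) (hdeg : p.natDegree = Fintype.card ι) {f : ι → K}
    (hf : Function.Injective f) (hroot : ∀ i, p.IsRoot (f i)) :
    p = ∏ i, (X - C (f i)) :=
  eq_of_monic_of_dvd_of_natDegree_le (monic_prod_of_monic _ _ fun i _ => monic_X_sub_C (f i)) hp
    (Fintype.prod_dvd_of_coprime (pairwise_coprime_X_sub_C hf) fun i => dvd_iff_isRoot.2 (hroot i))
    (by rw [hdeg, natDegree_finsetProd_X_sub_C_eq_card, card_univ])

theorem Finset.prod_X_sub_C_coeff {R σ : Type*} [CommRing R] (s : Finset σ) (r : σ → R) {k : ℕ}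
    (h : k ≤ #s) :
    (∏ i ∈ s, (X - C (r i))).coeff k
      = (-1) ^ (#s - k) * ∑ t ∈ s.powersetCard (#s - k), ∏ i ∈ t, r i := by
  have := Multiset.prod_X_sub_C_coeff (s.val.map r) (k := k) (by simpa using h)
  rw [Multiset.map_map, Multiset.card_map, Finset.esymm_map_val] at this
  exact this

theorem Polynomial.pow_succ_mul_coeff_of_eq_X_sub_C_mul {R : Type*} [CommRing R] {p q : R[X]}
    {a : R} (h : p = (X - C a) * q) (j : ℕ) :
    a ^ (j + 1) * q.coeff j = -∑ k ∈ range (j + 1), p.coeff k * a ^ k := by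
  induction j with
  | zero => simp [h, mul_coeff_zero]
  | succ j ih =>
    have hcoeff : p.coeff (j + 1) = q.coeff j - a * q.coeff (j + 1) := by
      rw [h, sub_mul, coeff_sub, coeff_X_mul, coeff_C_mul]
    rw [sum_range_succ, neg_add, ← ih, hcoeff]
    ring

theorem Polynomial.coeff_eq_neg_sum_zpow_of_eq_X_sub_C_mul {K : Type*} [Field K] {p q : K[X]}
    {a : K} (ha : a ≠ 0) (h : p = (X - C a) * q) (j : ℕ) :
    q.coeff j = -∑ k ∈ range (j + 1), p.coeff k * a ^ ((k : ℤ) - j - 1) := by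
  have hpow : ∀ k : ℕ, a ^ ((k : ℤ) - j - 1) = a ^ k / a ^ (j + 1) := fun k => by
    rw [← zpow_natCast, ← zpow_natCast, ← zpow_sub₀ ha]; push_cast; ring_nf
  simp_rw [hpow, mul_div_assoc', ← sum_div, ← neg_div, ← pow_succ_mul_coeff_of_eq_X_sub_C_mul h j]
  field_simp

theorem MvPolynomial.IsSymmetric.aeval_mem {R A σ : Type*} [CommRing R] [CommSemiring A]
    [Algebra R A] [Fintype σ] {Q : MvPolynomial σ R} (hQ : Q.IsSymmetric) {S : Subalgebra R A}
    {w : σ → A} (hS : ∀ k ∈ Icc 1 (Fintype.card σ), aeval w (esymm σ R k) ∈ S) :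
    aeval w Q ∈ S := by
  obtain ⟨P, hP⟩ := esymmAlgHom_surjective R le_rfl ⟨Q, hQ⟩
  have hQP : Q = aeval (fun i : Fin _ => esymm σ R (i + 1)) P := by
    rw [← esymmAlgHom_apply, hP]
  rw [hQP, ← AlgHom.comp_apply, comp_aeval]
  refine Algebra.adjoin_le ?_ ((aeval_range (R := R) _).le (AlgHom.mem_range_self _ P))
  rintro _ ⟨i, rfl⟩
  exact hS _ (mem_Icc.2 ⟨by omega, i.isLt⟩)

noncomputable def tamariPoly {R : Type*} [CommRing R] (m : ℕ) (v : R) : R[X] :=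
  (X + 1) ^ (m + 1) - C v * X ^ m

section tamariPoly

variable {R : Type*} [CommRing R] (m : ℕ) (v : R)

theorem isRoot_tamariPoly_iff (a : R) :
    (tamariPoly m v).IsRoot a ↔ (1 + a) ^ (m + 1) = v * a ^ m := by
  simp [tamariPoly, sub_eq_zero, add_comm a]

theorem coeff_tamariPoly_of_lt {k : ℕ} (hk : k < m) :
    (tamariPoly m v).coeff k = (m + 1).choose k := by
  simp [tamariPoly, coeff_X_add_one_pow, hk.ne]

theorem isMonicOfDegree_tamariPoly [Nontrivial R] : IsMonicOfDegree (tamariPoly m v) (m + 1) := by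
  have hpow := (isMonicOfDegree_X_add_one (1 : R)).pow (m + 1)
  rw [map_one, one_mul] at hpow
  exact hpow.sub ((natDegree_C_mul_X_pow_le v m).trans_lt m.lt_succ_self)

end tamariPoly

theorem esymm_tail_of_tamariPoly_roots {K : Type*} [Field K] {m : ℕ} {v : K}
    {u : Fin (m + 1) → K} (hinj : Function.Injective u)
    (hroot : ∀ i, (tamariPoly m v).IsRoot (u i)) (hu0 : u 0 ≠ 0) {j : ℕ} (hj : j < m) :
    ∑ s ∈ powersetCard (m - j) (univ : Finset (Fin m)), ∏ i ∈ s, u i.succ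
      = (-1) ^ (m - j - 1)
        * ∑ p ∈ range (j + 1), ((m + 1).choose p : K) * u 0 ^ ((p : ℤ) - j - 1) := by
  have hfac : tamariPoly m v = (X - C (u 0)) * ∏ i : Fin m, (X - C (u i.succ)) := by
    rw [← Fin.prod_univ_succ (f := fun i => X - C (u i))]
    have hdeg := isMonicOfDegree_tamariPoly m v
    exact hdeg.monic.eq_prod_X_sub_C_of_injective
      (by rw [hdeg.natDegree_eq, Fintype.card_fin]) hinj hroot
  have hvieta := prod_X_sub_C_coeff univ (fun i : Fin m => u i.succ) (k := j)
    (by rw [card_univ, Fintype.card_fin]; omega)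
  rw [coeff_eq_neg_sum_zpow_of_eq_X_sub_C_mul hu0 hfac, card_univ, Fintype.card_fin] at hvieta
  rw [sum_congr rfl fun k hk => by
    rw [coeff_tamariPoly_of_lt m v (by rw [mem_range] at hk; omega)]] at hvieta
  obtain ⟨n, hn⟩ : ∃ n, m - j = n + 1 := ⟨m - j - 1, by omega⟩
  have hsign : ((-1 : K) ^ n) ^ 2 = 1 := by rw [← pow_mul, mul_comm, pow_mul, neg_one_sq, one_pow]
  rw [hn] at hvieta ⊢
  rw [Nat.add_sub_cancel]
  linear_combination (-1) ^ n * hvieta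
    - (∑ s ∈ powersetCard (n + 1) (univ : Finset (Fin m)), ∏ i ∈ s, u i.succ) * hsign

theorem esymm_of_other_tamari_roots_general (F : Type*) [Field F] (m : ℕ) (hm : 1 ≤ m)
    (E : Type*) [Field E] (φ : RatFunc F →+* E)
    (u : Fin (m + 1) → E) (hinj : Function.Injective u)
    (h0 : u 0 = φ RatFunc.X)
    (hroot : ∀ i, (1 + u i) ^ (m + 1)
      = φ ((1 + RatFunc.X) ^ (m + 1) / RatFunc.X ^ m) * (u i) ^ m) :
    (∀ j : ℕ, j ≤ m - 1 →
        ∑ s ∈ Finset.powersetCard (m - j) (Finset.univ : Finset (Fin m)),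
            ∏ i ∈ s, u i.succ
          = (-1) ^ (m - j - 1)
              * ∑ p ∈ Finset.range (j + 1),
                  (Nat.choose (m + 1) p : E) * (φ RatFunc.X) ^ ((p : ℤ) - j - 1)) ∧
      (∑ s ∈ Finset.powersetCard 0 (Finset.univ : Finset (Fin m)), ∏ i ∈ s, u i.succ = 1) ∧
      (∀ Q : MvPolynomial (Fin m) F, Q.IsSymmetric →
        ∃ P : Polynomial F,
          Polynomial.eval₂ (φ.comp (algebraMap F (RatFunc F))) (φ RatFunc.X)⁻¹ P
            = MvPolynomial.eval₂ (φ.comp (algebraMap F (RatFunc F))) (fun i => u i.succ) Q) := by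
  have hx : φ RatFunc.X ≠ 0 := (map_ne_zero φ).2 RatFunc.X_ne_zero
  have hesymm : ∀ j < m, ∑ s ∈ powersetCard (m - j) (univ : Finset (Fin m)), ∏ i ∈ s, u i.succ
      = (-1) ^ (m - j - 1)
        * ∑ p ∈ range (j + 1), ((m + 1).choose p : E) * φ RatFunc.X ^ ((p : ℤ) - j - 1) :=
    fun j hj => h0 ▸ esymm_tail_of_tamariPoly_roots hinj
      (fun i => (isRoot_tamariPoly_iff m _ _).2 (hroot i)) (h0 ▸ hx) hj
  refine ⟨fun j hj => hesymm j (by omega), by simp, fun Q hQ => ?_⟩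
  -- with this algebra structure `aeval` unfolds to the `eval₂` of the statement
  let : Algebra F E := (φ.comp (algebraMap F (RatFunc F))).toAlgebra
  have hmem : MvPolynomial.aeval (fun i : Fin m => u i.succ) Q
      ∈ (aeval (φ RatFunc.X)⁻¹ : F[X] →ₐ[F] E).range := by
    refine hQ.aeval_mem fun k hk => ?_
    rw [mem_Icc, Fintype.card_fin] at hk
    rw [MvPolynomial.aeval_esymm_eq_multiset_esymm, esymm_map_val, ← Nat.sub_sub_self hk.2,
      hesymm (m - k) (by omega)]
    refine mul_mem (pow_mem (neg_mem (one_mem _)) _)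
      (sum_mem fun p hp => mul_mem (Subalgebra.natCast_mem _ _) ?_)
    rw [mem_range] at hp
    rw [show (p : ℤ) - (m - k : ℕ) - 1 = -((m - k + 1 - p : ℕ) : ℤ) by omega, zpow_neg,
      zpow_natCast, ← inv_pow]
    exact pow_mem ((AlgHom.mem_range _).2 ⟨X, aeval_X _⟩) _
  exact hmem

/-- Let `m ≥ 1`, `F` a field of characteristic zero, `v = (1+u)^{m+1} u^{−m} ∈ F(u)`, and let
`u_0 = u, u_1, …, u_m` be the `m+1` distinct roots of `(1+U)^{m+1} − v U^m` in a splitting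
field `E` over `F(u)`.  Then for `0 ≤ j ≤ m−1`,
`e_{m−j}(u_1,…,u_m) = (−1)^{m−j−1} ∑_{p=0}^{j} binom(m+1,p) u^{p−j−1}`, while
`e_0(u_1,…,u_m) = 1`.  In particular every symmetric polynomial in `u_1, …, u_m` lies in
`F[u⁻¹]`. -/
theorem esymm_of_other_tamari_roots (F : Type*) [Field F] [CharZero F] (m : ℕ) (hm : 1 ≤ m)
    (E : Type*) [Field E] (φ : RatFunc F →+* E)
    (u : Fin (m + 1) → E) (hinj : Function.Injective u)
    (h0 : u 0 = φ RatFunc.X)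
    (hroot : ∀ i, (1 + u i) ^ (m + 1)
      = φ ((1 + RatFunc.X) ^ (m + 1) / RatFunc.X ^ m) * (u i) ^ m) :
    (∀ j : ℕ, j ≤ m - 1 →
        ∑ s ∈ Finset.powersetCard (m - j) (Finset.univ : Finset (Fin m)),
            ∏ i ∈ s, u i.succ
          = (-1) ^ (m - j - 1)
              * ∑ p ∈ Finset.range (j + 1),
                  (Nat.choose (m + 1) p : E) * (φ RatFunc.X) ^ ((p : ℤ) - j - 1)) ∧
      (∑ s ∈ Finset.powersetCard 0 (Finset.univ : Finset (Fin m)), ∏ i ∈ s, u i.succ = 1) ∧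
      (∀ Q : MvPolynomial (Fin m) F, Q.IsSymmetric →
        ∃ P : Polynomial F,
          Polynomial.eval₂ (φ.comp (algebraMap F (RatFunc F))) (φ RatFunc.X)⁻¹ P
            = MvPolynomial.eval₂ (φ.comp (algebraMap F (RatFunc F))) (fun i => u i.succ) Q) :=
  esymm_of_other_tamari_roots_general F m hm E φ u hinj h0 hroot
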